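/- arXiv:2006.07511 — 2 statements merged into one kernel-verified Lean document; each statement's English description precedes it below -/
import Mathlib

section
/- Laplace transform of the derivative: if f : [0,∞) → ℍ is continuously differentiable and both f and f' are of exponential order a, then for all s ∈ ℍ with Re(s) > a, L^l{f'}(s) = s · L^l{f}(s) - f(0). -/
open Quaternion MeasureTheory

theorem laplace_deriv (f f' : ℝ → ℍ[ℝ]) (a K K' : ℝ) (ha : 0 ≤ a)
    (hderiv : ∀ t : ℝ, 0 ≤ t → HasDerivAt f (f' t) t)
    (hcont : Continuous f')
    (hf : ∀ t : ℝ, 0 ≤ t → ‖f t‖ ≤ K * Real.exp (a * t))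
    (hf' : ∀ t : ℝ, 0 ≤ t → ‖f' t‖ ≤ K' * Real.exp (a * t)) :
    ∀ s : ℍ[ℝ], a < s.re →
      (∫ t in Set.Ioi (0 : ℝ), NormedSpace.exp (-(t • s)) * f' t) =
        s * (∫ t in Set.Ioi (0 : ℝ), NormedSpace.exp (-(t • s)) * f t) - f 0 := by
  intro s hs
  have hb : (0:ℝ) < s.re - a := sub_pos.mpr hs
  have hnorm : ∀ t : ℝ, ‖NormedSpace.exp (-(t • s))‖ = Real.exp (-(s.re * t)) := by
    intro t
    rw [Quaternion.norm_exp, ← Real.exp_eq_exp_ℝ]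
    simp [Real.abs_exp, mul_comm]
  have hexpc : Continuous fun t : ℝ => NormedSpace.exp (-(t • s)) :=
    (continuous_iff_continuousAt.2 fun x =>
      (NormedSpace.exp_analytic (𝕂 := ℝ) x).continuousAt).comp (by continuity)
  have hfc : ContinuousOn f (Set.Ici 0) := fun t ht =>
    ((hderiv t ht).continuousAt).continuousWithinAt
  -- integrability helper
  have key : ∀ (g : ℝ → ℍ[ℝ]) (C : ℝ), ContinuousOn g (Set.Ici 0) →
      (∀ t : ℝ, 0 ≤ t → ‖g t‖ ≤ C * Real.exp (a * t)) →
      IntegrableOn (fun t => NormedSpace.exp (-(t • s)) * g t) (Set.Ioi 0) := by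
    intro g C hg hgb
    have hmeas : AEStronglyMeasurable (fun t => NormedSpace.exp (-(t • s)) * g t)
        (volume.restrict (Set.Ioi 0)) := by
      apply ContinuousOn.aestronglyMeasurable _ measurableSet_Ioi
      exact (hexpc.continuousOn).mul (hg.mono Set.Ioi_subset_Ici_self)
    refine Integrable.mono' (g := fun t => C * Real.exp (-(s.re - a) * t))
      ((exp_neg_integrableOn_Ioi 0 hb).const_mul C) hmeas ?_
    filter_upwards [ae_restrict_mem measurableSet_Ioi] with t ht
    have ht' : (0:ℝ) ≤ t := le_of_lt ht
    calc ‖NormedSpace.exp (-(t • s)) * g t‖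
        ≤ ‖NormedSpace.exp (-(t • s))‖ * ‖g t‖ := norm_mul_le _ _
      _ ≤ Real.exp (-(s.re * t)) * (C * Real.exp (a * t)) := by
          rw [hnorm]
          exact mul_le_mul_of_nonneg_left (hgb t ht') (Real.exp_nonneg _)
      _ = C * Real.exp (-(s.re - a) * t) := by
          rw [show -(s.re - a) * t = -(s.re * t) + a * t by ring, Real.exp_add]
          ring
  have hint1 := key f' K' hcont.continuousOn hf'
  have hint2 := key f K hfc hf
  have hint3 : IntegrableOn (fun t => s * (NormedSpace.exp (-(t • s)) * f t))
      (Set.Ioi 0) := (ContinuousLinearMap.mul ℝ ℍ[ℝ] s).integrable_comp hint2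
  -- derivative of the product
  have hderivF : ∀ t ∈ Set.Ioi (0:ℝ),
      HasDerivAt (fun u : ℝ => NormedSpace.exp (-(u • s)) * f u)
      (NormedSpace.exp (-(t • s)) * f' t - s * (NormedSpace.exp (-(t • s)) * f t)) t := by
    intro t ht
    have h1 : HasDerivAt (fun u : ℝ => NormedSpace.exp (u • (-s)))
        (NormedSpace.exp (t • (-s)) * (-s)) t := hasDerivAt_exp_smul_const (-s) t
    have h2 := h1.mul (hderiv t ht.out.le)
    have hc : Commute s (NormedSpace.exp (t • (-s))) :=
      (((Commute.refl s).neg_right).smul_right t).exp_right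
    have hcom : NormedSpace.exp (t • (-s)) * (-s) = -(s * NormedSpace.exp (t • (-s))) := by
      rw [mul_neg, hc.eq]
    simp only [smul_neg] at h2 hcom ⊢
    refine h2.congr_deriv ?_
    rw [hcom, neg_mul, mul_assoc, neg_add_eq_sub]
  -- tendsto 0 at infinity
  have htend : Filter.Tendsto (fun t : ℝ => NormedSpace.exp (-(t • s)) * f t)
      Filter.atTop (nhds 0) := by
    have h0 : Filter.Tendsto (fun t : ℝ => K * Real.exp (-((s.re - a) * t)))
        Filter.atTop (nhds 0) := by
      have h1 : Filter.Tendsto (fun t : ℝ => (s.re - a) * t) Filter.atTop Filter.atTop :=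
        Filter.Tendsto.const_mul_atTop hb Filter.tendsto_id
      have := Real.tendsto_exp_neg_atTop_nhds_zero.comp h1
      simpa using this.const_mul K
    apply squeeze_zero_norm' _ h0
    filter_upwards [Filter.eventually_ge_atTop (0:ℝ)] with t ht
    calc ‖NormedSpace.exp (-(t • s)) * f t‖
        ≤ ‖NormedSpace.exp (-(t • s))‖ * ‖f t‖ := norm_mul_le _ _
      _ ≤ Real.exp (-(s.re * t)) * (K * Real.exp (a * t)) := by
          rw [hnorm]
          exact mul_le_mul_of_nonneg_left (hf t ht) (Real.exp_nonneg _)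
      _ = K * Real.exp (-((s.re - a) * t)) := by
          rw [show -((s.re - a) * t) = -(s.re * t) + a * t by ring, Real.exp_add]
          ring
  have hcw : ContinuousWithinAt (fun t : ℝ => NormedSpace.exp (-(t • s)) * f t)
      (Set.Ici 0) 0 :=
    (hexpc.continuousOn.mul hfc) 0 Set.self_mem_Ici
  have hF := integral_Ioi_of_hasDerivAt_of_tendsto hcw hderivF (hint1.sub hint3) htend
  simp only [zero_smul, neg_zero, NormedSpace.exp_zero, one_mul, zero_sub] at hF
  rw [integral_sub hint1 hint3] at hF
  have hmul : (∫ t in Set.Ioi (0:ℝ), s * (NormedSpace.exp (-(t • s)) * f t)) =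
      s * ∫ t in Set.Ioi (0:ℝ), NormedSpace.exp (-(t • s)) * f t := by
    exact ((ContinuousLinearMap.mul ℝ ℍ[ℝ] s).integral_comp_comm hint2)
  rw [hmul] at hF
  rw [sub_eq_iff_eq_add] at hF
  rw [hF]
  abel
end

section
/- Convolution theorem on the real axis: let f, g : [0,∞) → ℍ be measurable and of exponential orders a and b respectively, and let (f∘g)(t) = ∫₀^t f(t-τ) g(τ) dτ. Then for real s > max(a,b), L^l{f∘g}(s) = L^l{f}(s) · L^l{g}(s). -/
open Quaternion MeasureTheory
open scoped Convolution

noncomputable instance : MeasurableSpace ℍ[ℝ] := borel _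
instance : BorelSpace ℍ[ℝ] := ⟨rfl⟩

theorem laplace_convolution (f g : ℝ → ℍ[ℝ]) (a b K L : ℝ)
    (hfm : Measurable f) (hgm : Measurable g) (hK : 0 < K) (hL : 0 < L)
    (hf : ∀ t : ℝ, 0 ≤ t → ‖f t‖ ≤ K * Real.exp (a * t))
    (hg : ∀ t : ℝ, 0 ≤ t → ‖g t‖ ≤ L * Real.exp (b * t))
    (s : ℝ) (hs : max a b < s) :
    (∫ t in Set.Ioi (0 : ℝ),
        Real.exp (-(t * s)) • (∫ τ in (0 : ℝ)..t, f (t - τ) * g τ)) =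
      (∫ t in Set.Ioi (0 : ℝ), Real.exp (-(t * s)) • f t) *
        (∫ t in Set.Ioi (0 : ℝ), Real.exp (-(t * s)) • g t) := by
  have hs1 : a < s := lt_of_le_of_lt (le_max_left a b) hs
  have hs2 : b < s := lt_of_le_of_lt (le_max_right a b) hs
  set F : ℝ → ℍ[ℝ] := Set.indicator (Set.Ioi 0) (fun t => Real.exp (-(t*s)) • f t) with hFdef
  set G : ℝ → ℍ[ℝ] := Set.indicator (Set.Ioi 0) (fun t => Real.exp (-(t*s)) • g t) with hGdef
  have hexpm : Measurable (fun t : ℝ => Real.exp (-(t*s))) :=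
    (Real.measurable_exp.comp ((measurable_id.mul_const s).neg))
  have hFm : Measurable F := (hexpm.smul hfm).indicator measurableSet_Ioi
  have hGm : Measurable G := (hexpm.smul hgm).indicator measurableSet_Ioi
  have hint : ∀ (h : ℝ → ℍ[ℝ]) (c C : ℝ), 0 < C → c < s → Measurable h →
      (∀ t : ℝ, 0 ≤ t → ‖h t‖ ≤ C * Real.exp (c * t)) →
      Integrable (Set.indicator (Set.Ioi 0) (fun t => Real.exp (-(t*s)) • h t)) := by
    intro h c C hC hcs hm hb
    rw [integrable_indicator_iff measurableSet_Ioi]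
    have hmaj : IntegrableOn (fun t : ℝ => C * Real.exp (-(s - c) * t)) (Set.Ioi 0) :=
      (exp_neg_integrableOn_Ioi 0 (by linarith)).const_mul C
    refine MeasureTheory.Integrable.mono hmaj ((hexpm.smul hm).aestronglyMeasurable) ?_
    filter_upwards [ae_restrict_mem measurableSet_Ioi] with t ht
    have ht' : (0:ℝ) ≤ t := le_of_lt ht
    have h1 : ‖Real.exp (-(t*s)) • h t‖ = Real.exp (-(t*s)) * ‖h t‖ := by
      rw [norm_smul, Real.norm_eq_abs, abs_of_pos (Real.exp_pos _)]
    rw [h1]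
    have h2 : Real.exp (-(t*s)) * ‖h t‖ ≤ Real.exp (-(t*s)) * (C * Real.exp (c * t)) :=
      mul_le_mul_of_nonneg_left (hb t ht') (le_of_lt (Real.exp_pos _))
    calc Real.exp (-(t*s)) * ‖h t‖ ≤ Real.exp (-(t*s)) * (C * Real.exp (c * t)) := h2
      _ = C * Real.exp (-(s - c) * t) := by
          rw [mul_left_comm, ← Real.exp_add]
          congr 2
          ring
      _ ≤ ‖C * Real.exp (-(s - c) * t)‖ := le_abs_self _
  have hFi : Integrable F := hint f a K hK hs1 hfm hf
  have hGi : Integrable G := hint g b L hL hs2 hgm hg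
  have key := integral_convolution (L := ContinuousLinearMap.mul ℝ ℍ[ℝ])
    (μ := (volume : Measure ℝ)) (ν := (volume : Measure ℝ)) hFi hGi
  simp only [ContinuousLinearMap.mul_apply'] at key
  have hFint : ∫ x, F x = ∫ t in Set.Ioi (0:ℝ), Real.exp (-(t*s)) • f t := by
    rw [hFdef, integral_indicator measurableSet_Ioi]
  have hGint : ∫ x, G x = ∫ t in Set.Ioi (0:ℝ), Real.exp (-(t*s)) • g t := by
    rw [hGdef, integral_indicator measurableSet_Ioi]
  rw [hFint, hGint] at key
  rw [← key]
  -- Now show LHS = ∫ x, (F ⋆ G) x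
  have hconv : ∀ x : ℝ, (F ⋆[ContinuousLinearMap.mul ℝ ℍ[ℝ], volume] G) x
      = Set.indicator (Set.Ioi 0)
        (fun x => Real.exp (-(x*s)) • (∫ τ in (0:ℝ)..x, f (x - τ) * g τ)) x := by
    intro x
    rw [convolution_eq_swap]
    by_cases hx : x ∈ Set.Ioi (0:ℝ)
    · rw [Set.indicator_of_mem hx]
      have hx0 : (0:ℝ) < x := hx
      have heq : (fun t => (ContinuousLinearMap.mul ℝ ℍ[ℝ]) (F (x - t)) (G t))
          = Set.indicator (Set.Ioo 0 x) (fun t => Real.exp (-(x*s)) • (f (x - t) * g t)) := by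
        funext t
        simp only [ContinuousLinearMap.mul_apply']
        by_cases ht : t ∈ Set.Ioo (0:ℝ) x
        · rw [Set.indicator_of_mem ht]
          have h1 : x - t ∈ Set.Ioi (0:ℝ) := by
            simp only [Set.mem_Ioi]; linarith [ht.2]
          have h2 : t ∈ Set.Ioi (0:ℝ) := ht.1
          rw [hFdef, hGdef, Set.indicator_of_mem h1, Set.indicator_of_mem h2,
            smul_mul_smul_comm, ← Real.exp_add]
          congr 2
          ring
        · rw [Set.indicator_of_notMem ht]
          rcases not_and_or.mp (Set.mem_Ioo.not.mp ht) with h | h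
          · have : G t = 0 := Set.indicator_of_notMem (by simpa using h) _
            rw [this, mul_zero]
          · have : F (x - t) = 0 := by
              apply Set.indicator_of_notMem
              simp only [Set.mem_Ioi, not_lt]
              linarith [not_lt.mp h]
            rw [this, zero_mul]
      rw [heq, integral_indicator measurableSet_Ioo, integral_smul,
        intervalIntegral.integral_of_le (le_of_lt hx0), ← integral_Ioc_eq_integral_Ioo]
    · rw [Set.indicator_of_notMem hx]
      have hx0 : x ≤ 0 := not_lt.mp (by simpa using hx)
      have : ∀ t : ℝ, (ContinuousLinearMap.mul ℝ ℍ[ℝ]) (F (x - t)) (G t) = 0 := by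
        intro t
        simp only [ContinuousLinearMap.mul_apply']
        by_cases ht : t ∈ Set.Ioi (0:ℝ)
        · have : F (x - t) = 0 := by
            apply Set.indicator_of_notMem
            simp only [Set.mem_Ioi, not_lt]
            have : (0:ℝ) < t := ht
            linarith
          rw [this, zero_mul]
        · have : G t = 0 := Set.indicator_of_notMem ht _
          rw [this, mul_zero]
      simp only [this, integral_zero]
  calc (∫ t in Set.Ioi (0 : ℝ),
        Real.exp (-(t * s)) • (∫ τ in (0 : ℝ)..t, f (t - τ) * g τ))
      = ∫ x, Set.indicator (Set.Ioi 0)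
          (fun x => Real.exp (-(x*s)) • (∫ τ in (0:ℝ)..x, f (x - τ) * g τ)) x := by
        rw [integral_indicator measurableSet_Ioi]
    _ = ∫ x, (F ⋆[ContinuousLinearMap.mul ℝ ℍ[ℝ], volume] G) x := by
        exact integral_congr_ae (Filter.Eventually.of_forall fun x => (hconv x).symm)
end
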